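/- arXiv:1204.6233 — 2 statements merged into one kernel-verified Lean document; each statement's English description precedes it below -/
import Mathlib

section
/- For every integer w ≥ 0 there exists a CNF formula F and a variable x ∈ var(F) such that {x} is a strong W_{≤1}-backdoor set of F and tw(inc(F)) ≥ w. -/
/-- `twLE G t` means the treewidth of `G` is at most `t`. -/
def twLE {α : Type} (G : SimpleGraph α) (t : ℕ) : Prop :=
  ∃ (ι : Type) (T : SimpleGraph ι) (bag : ι → Finset α),
    T.IsTree ∧
    (∀ u v : α, G.Adj u v → ∃ i, u ∈ bag i ∧ v ∈ bag i) ∧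
    (∀ v : α, (T.induce {i | v ∈ bag i}).Connected) ∧
    (∀ i, (bag i).card ≤ t + 1)

def wallRel (r : ℕ) (p q : ℕ × ℕ) : Prop :=
  1 ≤ p.1 ∧ p.1 ≤ r ∧ 1 ≤ p.2 ∧ p.2 ≤ r ∧
  1 ≤ q.1 ∧ q.1 ≤ r ∧ 1 ≤ q.2 ∧ q.2 ≤ r ∧
  ((p.2 = q.2 ∧ q.1 = p.1 + 1) ∨ (p.1 = q.1 ∧ q.2 = p.2 + 1 ∧ Even (p.1 + p.2)))

def wallGraph (r : ℕ) : SimpleGraph (ℕ × ℕ) := SimpleGraph.fromRel (wallRel r)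

def wallVerts (r : ℕ) : Set (ℕ × ℕ) := {p | 1 ≤ p.1 ∧ p.1 ≤ r ∧ 1 ≤ p.2 ∧ p.2 ≤ r}

/-- The `r`-wall. -/
def Wall (r : ℕ) : SimpleGraph (wallVerts r) := (wallGraph r).induce (wallVerts r)

/-- `W` is (exactly) a subdivision of `H`. -/
def IsSubdivisionOf {γ β : Type} (W : SimpleGraph γ) (H : SimpleGraph β) : Prop :=
  ∃ (b : β → γ) (p : ∀ u v : β, H.Adj u v → W.Walk (b u) (b v)),
    Function.Injective b ∧
    (∀ (u v : β) (h : H.Adj u v), (p u v h).IsPath) ∧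
    (∀ (u v : β) (h : H.Adj u v), p v u h.symm = (p u v h).reverse) ∧
    (∀ (u v : β) (h : H.Adj u v) (x : β), b x ∈ (p u v h).support → x = u ∨ x = v) ∧
    (∀ (u v : β) (h : H.Adj u v) (u' v' : β) (h' : H.Adj u' v'), s(u, v) ≠ s(u', v') →
      ∀ w : γ, w ∈ (p u v h).support → w ∈ (p u' v' h').support → w = b u ∨ w = b v) ∧
    (∀ w : γ, ∃ (u v : β) (h : H.Adj u v), w ∈ (p u v h).support) ∧
    (∀ e ∈ W.edgeSet, ∃ (u v : β) (h : H.Adj u v), e ∈ (p u v h).edges)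

/-- `G` contains `H` as a topological minor. -/
def containsSubdivision {α β : Type} (G : SimpleGraph α) (H : SimpleGraph β) : Prop :=
  ∃ W : G.Subgraph, IsSubdivisionOf W.coe H

noncomputable def nb (t : ℕ) : ℕ := ⌈(16 : ℝ) * ((t : ℝ) + 2) * Real.logb 2 ((t : ℝ) + 2)⌉₊
noncomputable def sameF (k t : ℕ) : ℕ := 3 * (nb t) ^ 2 * t * 2 ^ (2 * k)
noncomputable def obsF (k t : ℕ) : ℕ := 2 ^ k * sameF k t + k
noncomputable def wallF (k t : ℕ) : ℕ := (2 * t + 2) * (1 + ⌈Real.sqrt (obsF k t)⌉₊)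

structure CNF (V : Type) where
  ι : Type
  cls : Finset ι
  lit : ι → Finset (V × Bool)
  ok : ∀ i ∈ cls, ∀ v : V, ¬((v, true) ∈ lit i ∧ (v, false) ∈ lit i)

def CNF.vars {V : Type} [DecidableEq V] (F : CNF V) : Finset V :=
  F.cls.biUnion (fun i => (F.lit i).image Prod.fst)

def CNF.reduce {V : Type} [DecidableEq V] (F : CNF V) (X : Finset V) (τ : V → Bool) : CNF V where
  ι := F.ι
  cls := F.cls.filter (fun i => ∀ l ∈ F.lit i, l.1 ∈ X → τ l.1 ≠ l.2)
  lit := fun i => (F.lit i).filter (fun l => l.1 ∉ X)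
  ok := by
    intro i hi v hv
    exact F.ok i (Finset.mem_of_mem_filter i hi) v
      ⟨(Finset.mem_filter.mp hv.1).1, (Finset.mem_filter.mp hv.2).1⟩

def CNF.inc {V : Type} (F : CNF V) : SimpleGraph (V ⊕ F.ι) :=
  SimpleGraph.fromRel (fun a b =>
    match a, b with
    | Sum.inl x, Sum.inr i => i ∈ F.cls ∧ ((x, true) ∈ F.lit i ∨ (x, false) ∈ F.lit i)
    | _, _ => False)

/-- The vertices of `inc F` surviving the application of the partial assignment `τ` on `X`. -/
def CNF.surv {V : Type} (F : CNF V) (X : Finset V) (τ : V → Bool) : Set (V ⊕ F.ι) :=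
  {a | match a with
       | Sum.inl x => x ∉ X
       | Sum.inr i => ∀ l ∈ F.lit i, l.1 ∈ X → τ l.1 ≠ l.2}

def CNF.strongBackdoor {V : Type} [DecidableEq V] (F : CNF V) (t : ℕ) (B : Finset V) : Prop :=
  B ⊆ F.vars ∧ ∀ τ : V → Bool, twLE (F.reduce B τ).inc t

def CNF.delete {V : Type} [DecidableEq V] (F : CNF V) (B : Finset V) : CNF V where
  ι := F.ι
  cls := F.cls
  lit := fun i => (F.lit i).filter (fun l => l.1 ∉ B)
  ok := by
    intro i hi v hv
    exact F.ok i hi v ⟨(Finset.mem_filter.mp hv.1).1, (Finset.mem_filter.mp hv.2).1⟩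

noncomputable def CNF.count {V : Type} [DecidableEq V] (F : CNF V) : ℕ :=
  Nat.card {σ : {x // x ∈ F.vars} → Bool //
    ∀ i ∈ F.cls, ∃ l ∈ F.lit i, ∃ h : l.1 ∈ F.vars, σ ⟨l.1, h⟩ = l.2}

def ValidOT {α κ : Type} (G : SimpleGraph α) (W : G.Subgraph) (Z : Finset α) (t : ℕ)
    (Q : Finset κ) (N : κ → Finset α) (P : Set (Set α)) (R : κ → Set α) : Prop :=
  (∀ A ∈ P, A ⊆ W.verts ∧ (W.induce A).Connected) ∧
  (∀ A ∈ P, ∀ A' ∈ P, A ≠ A' → Disjoint A A') ∧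
  (⋃ A ∈ P, A) = W.verts ∧
  (∀ q ∈ Q, R q ∈ P) ∧
  (∀ q ∈ Q, (N q : Set α) ⊆ (Z : Set α)) ∧
  (∀ q ∈ Q, ∀ z ∈ N q, z ∉ R q ∧ ∃ w ∈ R q, G.Adj z w) ∧
  (∀ q ∈ Q, ∃ z ∈ N q, ∀ q' ∈ Q, q' ≠ q → R q' = R q → z ∉ N q') ∧
  (∀ z ∈ Z, ∃ q ∈ Q, z ∈ N q) ∧
  (∀ q ∈ Q, nb t ≤ (N q).card ∧ (N q).card ≤ 3 * nb t) ∧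
  (∀ q ∈ Q, ∀ v ∈ R q, ∀ v' ∈ R q,
    (∃ z ∈ Z, G.Adj v z ∧ z ∉ N q) → (∃ z ∈ Z, G.Adj v' z ∧ z ∉ N q) → v = v')

def HasMinor {α β : Type} (G : SimpleGraph α) (H : SimpleGraph β) : Prop :=
  ∃ C : β → Set α,
    (∀ u, (C u).Nonempty) ∧
    (∀ u, (G.induce (C u)).Connected) ∧
    (∀ u v, u ≠ v → Disjoint (C u) (C v)) ∧
    (∀ u v, H.Adj u v → ∃ a ∈ C u, ∃ b ∈ C v, G.Adj a b)

/-!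
Take an `n × n` grid of variables `v_p` and one more variable `x`, and for every edge `pq` of the
grid the clause `x ∨ v_p ∨ v_q` if the edge is horizontal, `¬x ∨ v_p ∨ v_q` if it is vertical.
Either value of `x` satisfies all clauses of one direction and deletes `x` from the others, which
then form disjoint paths: the reduced incidence graph is a forest, of treewidth one.

The incidence graph of the whole formula contains a subdivided grid. The crosses (row `i` plus
column `j`) are connected and pairwise intersecting, so in a tree decomposition the sets of bags
meeting them are pairwise intersecting subtrees; by the Helly property some bag meets all `n²`
crosses. A bag with fewer than `n` vertices misses some row `i` and some column `j`, hence the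
cross `(i, j)`, so the treewidth is at least `n - 1`.
-/

open SimpleGraph Finset

namespace SimpleGraph

variable {V : Type} {G : SimpleGraph V}

lemma reachable_induce_iff {s : Set V} {a b : s} :
    (G.induce s).Reachable a b ↔ ∃ p : G.Walk a b, ∀ v ∈ p.support, v ∈ s := by
  constructor
  · rintro ⟨p⟩
    refine ⟨p.map (Embedding.induce s).toHom, fun v hv => ?_⟩
    obtain ⟨u, -, rfl⟩ := List.mem_map.mp (p.support_map (Embedding.induce s).toHom ▸ hv)
    exact u.2
  · rintro ⟨p, hp⟩
    exact ⟨p.induce s hp⟩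

lemma connected_induce_image_Iic {f : ℕ → V} {L : ℕ} (hf : ∀ m < L, G.Adj (f m) (f (m + 1))) :
    (G.induce (f '' Set.Iic L)).Connected := by
  rw [connected_iff_exists_forall_reachable]
  refine ⟨⟨f 0, 0, by simp, rfl⟩, ?_⟩
  rintro ⟨_, m, hm, rfl⟩
  induction m with
  | zero => rfl
  | succ m ih =>
    have hm : m + 1 ≤ L := hm
    exact (ih (by simp; omega)).trans (induce_adj.mpr (hf m hm)).reachable

lemma Walk.exists_isPath_through_common_vertex [DecidableEq V] {a b c : V} (p : G.Walk a b)
    (hp : p.IsPath) (q : G.Walk b c) (hq : q.IsPath) :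
    ∃ m ∈ p.support, m ∈ q.support ∧ ∃ w : G.Walk a c, w.IsPath ∧ m ∈ w.support ∧
      ∀ v ∈ w.support, v ∈ p.support ∨ v ∈ q.support := by
  induction p with
  | nil => exact ⟨_, by simp, q.start_mem_support, q, hq, q.start_mem_support, fun _ => .inr⟩
  | @cons a a' b h p ih =>
    rw [Walk.cons_isPath_iff] at hp
    by_cases ha : a ∈ q.support
    · exact ⟨a, by simp, ha, q.dropUntil a ha, hq.dropUntil ha, Walk.start_mem_support _,
        fun v hv => .inr (Walk.support_dropUntil_subset_support _ _ hv)⟩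
    obtain ⟨m, hmp, hmq, w, hw, hmw, hsub⟩ := ih hp.1 q hq
    have haw : a ∉ w.support := fun h => (hsub a h).elim hp.2 ha
    refine ⟨m, by simp [hmp], hmq, .cons h w, hw.cons haw, by simp [hmw], fun v hv => ?_⟩
    rcases List.mem_cons.mp (Walk.support_cons h w ▸ hv) with rfl | hv
    · simp
    · exact (hsub v hv).imp_left (by simp +contextual)

namespace IsAcyclic

variable (hG : G.IsAcyclic)
include hG

lemma support_subset_of_isPath {s : Set V} (hs : (G.induce s).Preconnected) {a b : V}
    (ha : a ∈ s) (hb : b ∈ s) {p : G.Walk a b} (hp : p.IsPath) : ∀ v ∈ p.support, v ∈ s := by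
  classical
  obtain ⟨q, hq⟩ := reachable_induce_iff.mp (hs ⟨a, ha⟩ ⟨b, hb⟩)
  have hpq : p = q.bypass :=
    congrArg Subtype.val ((hG.subsingleton_path a b).elim ⟨p, hp⟩ ⟨_, q.bypass_isPath⟩)
  exact hpq ▸ fun v hv => hq v (q.support_bypass_subset_support hv)

lemma preconnected_induce_inter {s t : Set V} (hs : (G.induce s).Preconnected)
    (ht : (G.induce t).Preconnected) : (G.induce (s ∩ t)).Preconnected := by
  classical
  rintro ⟨a, has, hat⟩ ⟨b, hbs, hbt⟩
  obtain ⟨q, hq⟩ := reachable_induce_iff.mp (hs ⟨a, has⟩ ⟨b, hbs⟩)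
  exact reachable_induce_iff.mpr ⟨q.bypass, fun v hv =>
    ⟨hq v (q.support_bypass_subset_support hv),
      hG.support_subset_of_isPath ht hat hbt q.bypass_isPath v hv⟩⟩

lemma inter_inter_nonempty {s t u : Set V} (hs : (G.induce s).Preconnected)
    (ht : (G.induce t).Preconnected) (hu : (G.induce u).Preconnected)
    (hst : (s ∩ t).Nonempty) (htu : (t ∩ u).Nonempty) (hsu : (s ∩ u).Nonempty) :
    (s ∩ t ∩ u).Nonempty := by
  classical
  obtain ⟨a, has, hat⟩ := hst
  obtain ⟨b, hbt, hbu⟩ := htu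
  obtain ⟨c, hcs, hcu⟩ := hsu
  obtain ⟨p, hp⟩ := reachable_induce_iff.mp (ht ⟨a, hat⟩ ⟨b, hbt⟩)
  obtain ⟨q, hq⟩ := reachable_induce_iff.mp (hu ⟨b, hbu⟩ ⟨c, hcu⟩)
  obtain ⟨m, hmp, hmq, w, hw, hmw, -⟩ :=
    p.bypass.exists_isPath_through_common_vertex p.bypass_isPath q.bypass q.bypass_isPath
  exact ⟨m, ⟨hG.support_subset_of_isPath hs has hcs hw m hmw,
    hp m (p.support_bypass_subset_support hmp)⟩, hq m (q.support_bypass_subset_support hmq)⟩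

/-- Helly property of subtrees of a forest. -/
theorem exists_forall_mem_of_pairwise_inter_nonempty {κ : Type*} {K : Finset κ}
    (hK : K.Nonempty) {S : κ → Set V} (hS : ∀ k ∈ K, (G.induce (S k)).Preconnected)
    (hSS : ∀ k ∈ K, ∀ l ∈ K, (S k ∩ S l).Nonempty) : ∃ v, ∀ k ∈ K, v ∈ S k := by
  induction hK using Finset.Nonempty.cons_induction generalizing S with
  | singleton k =>
    obtain ⟨v, hv, -⟩ := hSS k (mem_singleton_self k) k (mem_singleton_self k)
    exact ⟨v, by simpa using hv⟩
  | cons k K hk hK ih =>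
    simp only [mem_cons, forall_eq_or_imp] at hS hSS
    obtain ⟨v, hv⟩ := ih (S := fun l => S l ∩ S k)
      (fun l hl => hG.preconnected_induce_inter (hS.2 l hl) hS.1)
      (fun l hl l' hl' => by
        obtain ⟨x, ⟨⟨hxl, hxl'⟩, hxk⟩⟩ := hG.inter_inter_nonempty (hS.2 l hl) (hS.2 l' hl') hS.1
          (hSS.2 l hl |>.2 l' hl') (Set.inter_comm _ _ ▸ hSS.1.2 l' hl')
          (Set.inter_comm _ _ ▸ hSS.1.2 l hl)
        exact ⟨x, ⟨hxl, hxk⟩, hxl', hxk⟩)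
    simp only [mem_cons, forall_eq_or_imp]
    obtain ⟨l, hl⟩ := hK
    exact ⟨v, (hv l hl).2, fun l hl => (hv l hl).1⟩

end IsAcyclic

end SimpleGraph

section TreeDecomposition

variable {α ι : Type} {G : SimpleGraph α} {T : SimpleGraph ι} {bag : ι → Finset α}

lemma preconnected_induce_bags_meeting
    (hedge : ∀ u v, G.Adj u v → ∃ i, u ∈ bag i ∧ v ∈ bag i)
    (hconn : ∀ v, (T.induce {i | v ∈ bag i}).Connected) {S : Set α}
    (hS : (G.induce S).Preconnected) : (T.induce {i | ∃ v ∈ S, v ∈ bag i}).Preconnected := by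
  have hsub : ∀ {v}, v ∈ S → {i | v ∈ bag i} ⊆ {i | ∃ v ∈ S, v ∈ bag i} :=
    fun hv i hi => ⟨_, hv, hi⟩
  suffices key : ∀ {u u' : S}, (G.induce S).Walk u u' → ∀ i (hi : (u : α) ∈ bag i) i'
      (hi' : (u' : α) ∈ bag i'), (T.induce {i | ∃ v ∈ S, v ∈ bag i}).Reachable
        ⟨i, _, u.2, hi⟩ ⟨i', _, u'.2, hi'⟩ by
    rintro ⟨i, u, hu, hi⟩ ⟨i', u', hu', hi'⟩
    exact key (hS ⟨u, hu⟩ ⟨u', hu'⟩).some i hi i' hi'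
  intro u u' p
  induction p with
  | @nil u =>
    intro i hi i' hi'
    exact ((hconn _).preconnected ⟨i, hi⟩ ⟨i', hi'⟩).map (T.induceHomOfLE (hsub u.2)).toHom
  | @cons u w u' huw p ih =>
    intro i hi i' hi'
    obtain ⟨k, hku, hkw⟩ := hedge _ _ (induce_adj.mp huw)
    exact (((hconn _).preconnected ⟨i, hi⟩ ⟨k, hku⟩).map
      (T.induceHomOfLE (hsub u.2)).toHom).trans (ih k hkw i' hi')

lemma twLE.exists_card_le_forall_exists_mem {s : ℕ} (h : twLE G s) {κ : Type*} {K : Finset κ}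
    (hK : K.Nonempty) {C : κ → Set α} (hC : ∀ k ∈ K, (G.induce (C k)).Preconnected)
    (hCC : ∀ k ∈ K, ∀ l ∈ K, (C k ∩ C l).Nonempty) :
    ∃ B : Finset α, #B ≤ s + 1 ∧ ∀ k ∈ K, ∃ v ∈ B, v ∈ C k := by
  obtain ⟨ι, T, bag, hT, hedge, hconn, hcard⟩ := h
  have hbag : ∀ v, ∃ i, v ∈ bag i := fun v => by
    obtain ⟨⟨i, hi⟩⟩ := (hconn v).nonempty
    exact ⟨i, hi⟩
  obtain ⟨i, hi⟩ := hT.isAcyclic.exists_forall_mem_of_pairwise_inter_nonempty hK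
    (S := fun k => {i | ∃ v ∈ C k, v ∈ bag i})
    (fun k hk => preconnected_induce_bags_meeting hedge hconn (hC k hk))
    (fun k hk l hl => by
      obtain ⟨v, hvk, hvl⟩ := hCC k hk l hl
      obtain ⟨i, hi⟩ := hbag v
      exact ⟨i, ⟨v, hvk, hi⟩, v, hvl, hi⟩)
  exact ⟨bag i, hcard i, fun k hk => by
    obtain ⟨v, hv, hvi⟩ := hi k hk
    exact ⟨v, hvi, hv⟩⟩

end TreeDecomposition

section ParentGraph

variable {α : Type} {par : α → α} {r : α} {d : α → ℕ}

def parentGraph (par : α → α) : SimpleGraph α := fromRel fun a b => a = par b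

lemma parentGraph_adj {a b : α} :
    (parentGraph par).Adj a b ↔ a ≠ b ∧ (a = par b ∨ b = par a) :=
  fromRel_adj _ a b

variable (hr : par r = r) (hd : ∀ a ≠ r, d (par a) < d a)
include hd

lemma parentGraph_reachable_root (a : α) : (parentGraph par).Reachable a r := by
  induction h : d a using Nat.strong_induction_on generalizing a with
  | _ n ih =>
    by_cases ha : a = r
    · exact ha ▸ .refl _
    have hpar : par a ≠ a := fun h => (hd a ha).ne (by rw [h])
    exact (parentGraph_adj.mpr ⟨hpar.symm, .inr rfl⟩).reachable.trans (ih _ (h ▸ hd a ha) _ rfl)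

include hr

lemma rank_iterate_le (k : ℕ) (a : α) : d (par^[k] a) ≤ d a := by
  induction k with
  | zero => rfl
  | succ k ih =>
    rw [Function.iterate_succ_apply']
    refine le_trans ?_ ih
    by_cases h : par^[k] a = r
    · rw [h, hr]
    · exact (hd _ h).le

lemma parentGraph_isAcyclic : (parentGraph par).IsAcyclic := by
  suffices hbridge : ∀ a ≠ r, (parentGraph par).IsBridge s(a, par a) by
    rw [isAcyclic_iff_forall_adj_isBridge]
    intro u v huv
    rcases parentGraph_adj.mp huv with ⟨hne, rfl | rfl⟩
    · rw [Sym2.eq_swap]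
      exact hbridge v fun h => hne (h ▸ hr)
    · exact hbridge u fun h => hne (h ▸ hr.symm)
  intro a ha
  rw [isBridge_iff]
  rintro ⟨p⟩
  -- The descendants of `a` are closed under every edge except `s(a, par a)`.
  let D := {x | ∃ k, par^[k] x = a}
  have hD : ∀ {x y}, ((parentGraph par).deleteEdges {s(a, par a)}).Adj x y → x ∈ D → y ∈ D := by
    intro x y hxy ⟨k, hk⟩
    obtain ⟨hxy, hne⟩ := deleteEdges_adj.mp hxy
    rcases parentGraph_adj.mp hxy with ⟨-, rfl | rfl⟩
    · exact ⟨k + 1, by rwa [Function.iterate_succ_apply]⟩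
    · cases k with
      | zero => exact absurd (by rw [← hk]; rfl) hne
      | succ k => exact ⟨k, by rwa [← Function.iterate_succ_apply]⟩
  have hwalk : ∀ {x y} (q : ((parentGraph par).deleteEdges {s(a, par a)}).Walk x y),
      x ∈ D → y ∈ D := by
    intro x y q
    induction q with
    | nil => exact id
    | cons h _ ih => exact fun hx => ih (hD h hx)
  obtain ⟨k, hk⟩ := hwalk p ⟨0, rfl⟩
  have := rank_iterate_le hr hd k (par a)
  rw [hk] at this
  exact (hd a ha).not_ge this

lemma parentGraph_isTree : (parentGraph par).IsTree :=
  ⟨(connected_iff_exists_forall_reachable _).mpr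
    ⟨r, fun a => (parentGraph_reachable_root hd a).symm⟩, parentGraph_isAcyclic hr hd⟩

theorem twLE_one_of_adj_parent [DecidableEq α] {G : SimpleGraph α}
    (hG : ∀ a b, G.Adj a b → par a = b ∨ par b = a) : twLE G 1 := by
  refine ⟨α, parentGraph par, fun a => {a, par a}, parentGraph_isTree hr hd, ?_, ?_,
    fun a => card_le_two⟩
  · intro u v huv
    rcases hG u v huv with rfl | rfl
    · exact ⟨u, by simp⟩
    · exact ⟨v, by simp⟩
  · intro v
    rw [connected_iff_exists_forall_reachable]
    refine ⟨⟨v, by simp⟩, ?_⟩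
    rintro ⟨i, hi⟩
    rcases eq_or_ne v i with rfl | hne
    · rfl
    have hvi : v = par i := by simpa [hne] using hi
    exact (induce_adj.mpr (parentGraph_adj.mpr ⟨hne, .inl hvi⟩)).reachable

end ParentGraph

lemma CNF.inc_adj_inl_inr {V : Type} {F : CNF V} {x : V} {i : F.ι} :
    F.inc.Adj (.inl x) (.inr i) ↔ i ∈ F.cls ∧ ((x, true) ∈ F.lit i ∨ (x, false) ∈ F.lit i) := by
  simp [CNF.inc]

lemma CNF.not_inc_adj_inl_inl {V : Type} {F : CNF V} {x y : V} :
    ¬ F.inc.Adj (.inl x) (.inl y) := by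
  simp [CNF.inc]

lemma CNF.not_inc_adj_inr_inr {V : Type} {F : CNF V} {i j : F.ι} :
    ¬ F.inc.Adj (.inr i) (.inr j) := by
  simp [CNF.inc]

lemma exists_lt_forall_ne_of_card_lt {β : Type*} (B : Finset β) (f : β → ℕ) {n : ℕ}
    (hB : #B < n) : ∃ i < n, ∀ v ∈ B, f v ≠ i := by
  obtain ⟨i, hi, hiB⟩ := exists_mem_notMem_of_card_lt_card
    (card_image_le.trans_lt (hB.trans_eq (card_range n).symm) : #(B.image f) < #(range n))
  exact ⟨i, mem_range.mp hi, fun v hv hvi => hiB (mem_image.mpr ⟨v, hv, hvi⟩)⟩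

namespace GridCNF

def cell (p : ℕ × ℕ) : ℕ := Nat.pair p.1 p.2 + 1

lemma cell_ne_zero (p : ℕ × ℕ) : cell p ≠ 0 := Nat.succ_ne_zero _

lemma cell_injective : Function.Injective cell := fun p q h => by
  simpa [cell, Nat.pair_eq_pair, Prod.ext_iff] using h

def shift : Bool → ℕ × ℕ → ℕ → ℕ × ℕ
  | true, p, l => (p.1 + l, p.2)
  | false, p, l => (p.1, p.2 + l)

lemma shift_add_one (b : Bool) (p : ℕ × ℕ) (l : ℕ) :
    shift b p (l + 1) = shift b (shift b p l) 1 := by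
  cases b <;> simp [shift, add_assoc]

lemma shift_one_injective (b : Bool) : Function.Injective fun p => shift b p 1 := fun p q h => by
  cases b <;> simpa [shift, Prod.ext_iff] using h

lemma cell_lt_cell_shift (b : Bool) (p : ℕ × ℕ) : cell p < cell (shift b p 1) := by
  cases b
  · exact Nat.add_lt_add_right (Nat.pair_lt_pair_right _ (Nat.lt_succ_self _)) 1
  · exact Nat.add_lt_add_right (Nat.pair_lt_pair_left _ (Nat.lt_succ_self _)) 1

/-- Variable `0` is `x` and `cell p` is the grid variable `v_p`. The clause `(p, b)` joins `v_p`
to its neighbour in direction `b` (next row for `true`, next column for `false`) and contains `¬x`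
for `b = true`, `x` for `b = false`, so `x ↦ b` keeps exactly the clauses of direction `b`. -/
abbrev formula (n : ℕ) : CNF ℕ where
  ι := (ℕ × ℕ) × Bool
  cls := (range n ×ˢ range n) ×ˢ univ
  lit c := {(0, !c.2), (cell c.1, true), (cell (shift c.2 c.1 1), true)}
  ok := by
    rintro ⟨p, b⟩ - v ⟨h1, h2⟩
    simp only [mem_insert, mem_singleton, Prod.mk.injEq] at h1 h2
    have := cell_ne_zero p
    have := cell_ne_zero (shift b p 1)
    cases b <;> simp_all [eq_comm (a := 0)]

lemma zero_mem_vars {n : ℕ} (hn : 0 < n) : 0 ∈ (formula n).vars := by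
  simp only [CNF.vars, mem_biUnion, mem_image]
  exact ⟨((0, 0), true), by simp [hn], (0, false), by simp, rfl⟩

lemma reduce_inc_adj {n : ℕ} {τ : ℕ → Bool} {v : ℕ} {c : (ℕ × ℕ) × Bool}
    (h : ((formula n).reduce {0} τ).inc.Adj (.inl v) (.inr c)) :
    c.2 = τ 0 ∧ (v = cell c.1 ∨ v = cell (shift c.2 c.1 1)) := by
  obtain ⟨p, b⟩ := c
  obtain ⟨hc, hv⟩ := CNF.inc_adj_inl_inr.mp h
  have hx : τ 0 ≠ !b := (mem_filter.mp hc).2 (0, !b) (by simp) (by simp)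
  refine ⟨by cases b <;> simpa using hx, ?_⟩
  simp only [CNF.reduce, mem_filter, mem_insert, mem_singleton, Prod.mk.injEq] at hv
  tauto

open Classical in
/-- The parent map for `x ↦ b`: a clause hangs from its first cell, and a cell from the clause of
direction `b` entering it. -/
noncomputable def parent (b : Bool) : ℕ ⊕ ((ℕ × ℕ) × Bool) → ℕ ⊕ ((ℕ × ℕ) × Bool)
  | .inl v => if h : ∃ p, cell (shift b p 1) = v then .inr (h.choose, b) else .inl 0
  | .inr c => .inl (cell c.1)

def rank : ℕ ⊕ ((ℕ × ℕ) × Bool) → ℕ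
  | .inl v => 2 * v
  | .inr c => 2 * cell c.1 + 1

lemma parent_cell_shift (b : Bool) (p : ℕ × ℕ) :
    parent b (.inl (cell (shift b p 1))) = .inr (p, b) := by
  have h : ∃ q, cell (shift b q 1) = cell (shift b p 1) := ⟨p, rfl⟩
  rw [parent, dif_pos h, shift_one_injective b (cell_injective h.choose_spec)]

lemma parent_zero (b : Bool) : parent b (.inl 0) = .inl 0 := by
  simp [parent, cell_ne_zero]

lemma rank_parent_lt (b : Bool) {a : ℕ ⊕ ((ℕ × ℕ) × Bool)} (ha : a ≠ .inl 0) :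
    rank (parent b a) < rank a := by
  rcases a with v | c
  · by_cases h : ∃ p, cell (shift b p 1) = v
    · obtain ⟨p, rfl⟩ := h
      rw [parent_cell_shift]
      have := cell_lt_cell_shift b p
      simp only [rank]
      omega
    · have : v ≠ 0 := by simpa using ha
      simp only [parent, dif_neg h, rank]
      omega
  · simp [parent, rank]

theorem twLE_reduce_inc (n : ℕ) (τ : ℕ → Bool) : twLE ((formula n).reduce {0} τ).inc 1 := by
  refine twLE_one_of_adj_parent (par := parent (τ 0)) (r := .inl 0) (d := rank)
    (parent_zero _) (fun a ha => rank_parent_lt _ ha) ?_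
  have key : ∀ v c, ((formula n).reduce {0} τ).inc.Adj (.inl v) (.inr c) →
      parent (τ 0) (.inl v) = .inr c ∨ parent (τ 0) (.inr c) = .inl v := by
    rintro v ⟨p, b⟩ h
    obtain ⟨rfl, rfl | rfl⟩ := reduce_inc_adj h
    · exact .inr rfl
    · exact .inl (parent_cell_shift _ p)
  rintro (v | c) (v' | c') h
  · exact absurd h CNF.not_inc_adj_inl_inl
  · exact key v c' h
  · exact (key v' c h.symm).symm
  · exact absurd h CNF.not_inc_adj_inr_inr

def line (b : Bool) (p : ℕ × ℕ) (m : ℕ) : ℕ ⊕ ((ℕ × ℕ) × Bool) :=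
  if Even m then .inl (cell (shift b p (m / 2))) else .inr (shift b p (m / 2), b)

lemma line_two_mul (b : Bool) (p : ℕ × ℕ) (l : ℕ) :
    line b p (2 * l) = .inl (cell (shift b p l)) := by
  simp [line]

lemma line_two_mul_add_one (b : Bool) (p : ℕ × ℕ) (l : ℕ) :
    line b p (2 * l + 1) = .inr (shift b p l, b) := by
  simp [line, show (2 * l + 1) / 2 = l by omega]

lemma inc_adj_line {n : ℕ} {b : Bool} {p : ℕ × ℕ}
    (hp : ∀ l < n, shift b p l ∈ range n ×ˢ range n) {m : ℕ} (hm : m < 2 * n) :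
    (formula n).inc.Adj (line b p m) (line b p (m + 1)) := by
  rcases Nat.even_or_odd' m with ⟨l, rfl | rfl⟩
  · rw [line_two_mul, line_two_mul_add_one]
    exact CNF.inc_adj_inl_inr.mpr ⟨by simpa using hp l (by omega), by simp⟩
  · rw [line_two_mul_add_one, show 2 * l + 1 + 1 = 2 * (l + 1) by ring, line_two_mul,
      shift_add_one]
    exact (CNF.inc_adj_inl_inr.mpr ⟨by simpa using hp l (by omega), by simp⟩).symm

def pos : ℕ ⊕ ((ℕ × ℕ) × Bool) → ℕ × ℕ
  | .inl v => Nat.unpair (v - 1)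
  | .inr c => c.1

lemma pos_line (b : Bool) (p : ℕ × ℕ) (m : ℕ) : pos (line b p m) = shift b p (m / 2) := by
  unfold line
  split_ifs <;> simp [pos, cell]

/-- Row `i` together with column `j`, each prolonged by one cell beyond the grid. -/
def cross (n i j : ℕ) : Set (ℕ ⊕ ((ℕ × ℕ) × Bool)) :=
  line false (i, 0) '' Set.Iic (2 * n) ∪ line true (0, j) '' Set.Iic (2 * n)

lemma cross_connected {n i j : ℕ} (hi : i < n) (hj : j < n) :
    ((formula n).inc.induce (cross n i j)).Connected := by
  have hrow : ((formula n).inc.induce (line false (i, 0) '' Set.Iic (2 * n))).Connected :=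
    connected_induce_image_Iic fun m hm => inc_adj_line (fun l hl => by simp [shift, hi, hl]) hm
  have hcol : ((formula n).inc.induce (line true (0, j) '' Set.Iic (2 * n))).Connected :=
    connected_induce_image_Iic fun m hm => inc_adj_line (fun l hl => by simp [shift, hj, hl]) hm
  have hcenter : line false (i, 0) (2 * j) = line true (0, j) (2 * i) := by
    simp [line_two_mul, shift]
  exact induce_union_connected hrow.preconnected hcol.preconnected
    ⟨_, ⟨2 * j, by simp; omega, rfl⟩, 2 * i, by simp; omega, hcenter.symm⟩

lemma cross_inter_nonempty {n i j i' j' : ℕ} (hi : i < n) (hj' : j' < n) :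
    (cross n i j ∩ cross n i' j').Nonempty :=
  ⟨.inl (cell (i, j')), .inl ⟨2 * j', by simp; omega, by simp [line_two_mul, shift]⟩,
    .inr ⟨2 * i, by simp; omega, by simp [line_two_mul, shift]⟩⟩

lemma pos_of_mem_cross {n i j : ℕ} {a : ℕ ⊕ ((ℕ × ℕ) × Bool)} (ha : a ∈ cross n i j) :
    (pos a).1 = i ∨ (pos a).2 = j := by
  rcases ha with ⟨m, -, rfl⟩ | ⟨m, -, rfl⟩ <;> simp [pos_line, shift]

theorem not_twLE_inc {n s : ℕ} (hs : s + 1 < n) : ¬ twLE (formula n).inc s := by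
  intro h
  obtain ⟨B, hB, hhit⟩ := h.exists_card_le_forall_exists_mem (K := range n ×ˢ range n)
    (C := fun q => cross n q.1 q.2) ⟨(0, 0), by simp; omega⟩
    (fun q hq => (cross_connected (by simp_all) (by simp_all)).preconnected)
    (fun q hq q' hq' => cross_inter_nonempty (by simp_all) (by simp_all))
  obtain ⟨i, hi, hBi⟩ := exists_lt_forall_ne_of_card_lt (n := n) B (fun a => (pos a).1) (by omega)
  obtain ⟨j, hj, hBj⟩ := exists_lt_forall_ne_of_card_lt (n := n) B (fun a => (pos a).2) (by omega)
  obtain ⟨v, hvB, hv⟩ := hhit (i, j) (by simp [hi, hj])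
  exact (pos_of_mem_cross hv).elim (hBi v hvB) (hBj v hvB)

end GridCNF

/-- For every `w` there is a CNF formula `F` and a variable `x ∈ var(F)` such
that `{x}` is a strong `W_{≤1}`-backdoor set of `F` and `tw(inc(F)) ≥ w`. -/
theorem stmt18 (w : ℕ) :
    ∃ (F : CNF ℕ) (x : ℕ), x ∈ F.vars ∧ F.strongBackdoor 1 {x} ∧
      ∀ s : ℕ, s + 1 ≤ w → ¬ twLE F.inc s := by
  have hx := GridCNF.zero_mem_vars w.succ_pos
  exact ⟨GridCNF.formula (w + 1), 0, hx, ⟨singleton_subset_iff.mpr hx, GridCNF.twLE_reduce_inc _⟩,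
    fun s hs => GridCNF.not_twLE_inc (by omega)⟩
end

section
/- Let t ≥ 0 and k ≥ 1 be integers and F a CNF formula. Let O be a set of pairwise vertex-disjoint subgraphs of inc(F), each a subdivision of the (2t+2)-wall, and let B be a strong W_{≤t}-backdoor set of F with |B| ≤ k. Then at most k members W of O satisfy V(W) ∩ B ≠ ∅; consequently, at least |O| − k members of O are killed externally by some variable of B, i.e., for each such W there is x ∈ B with x ∉ V(W) such that W contains a clause c with x ∈ lit(c) and a clause c' with ¬x ∈ lit(c'). -/
/-!
A backdoor variable lies in at most one of the pairwise disjoint walls. Now let `W` be a wall that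
avoids `B` and is not killed externally by `B`. The assignment `τ` setting `x ∈ B` true exactly
when `¬x` occurs in a clause of `W` satisfies no clause of `W`, so `W` survives in the incidence
graph of `F[τ]`, whose treewidth is at most `t`. Treewidth does not grow under taking minors, and
a subdivision of a graph contains that graph as a minor, so the `(2t+2)`-wall would have
treewidth at most `t`. But the wall carries a bramble that no `t + 1` vertices meet, while some
bag of every tree decomposition meets all members of a bramble, by the Helly property of
subtrees of a tree.
-/

namespace SimpleGraph

variable {V : Type*} {G : SimpleGraph V}

def IsPathConvex (G : SimpleGraph V) (S : Set V) : Prop :=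
  ∀ ⦃u v⦄, u ∈ S → v ∈ S → ∀ p : G.Walk u v, p.IsPath → ∀ w ∈ p.support, w ∈ S

lemma IsPathConvex.inter {S S' : Set V} (h : G.IsPathConvex S) (h' : G.IsPathConvex S') :
    G.IsPathConvex (S ∩ S') :=
  fun _ _ hu hv p hp w hw => ⟨h hu.1 hv.1 p hp w hw, h' hu.2 hv.2 p hp w hw⟩

lemma isPathConvex_univ : G.IsPathConvex Set.univ := fun _ _ _ _ _ _ _ _ => trivial

lemma IsAcyclic.isPathConvex (hG : G.IsAcyclic) {S : Set V} (hS : (G.induce S).Preconnected) :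
    G.IsPathConvex S := by
  classical
  intro u v hu hv p hp w hw
  obtain ⟨q⟩ := hS ⟨u, hu⟩ ⟨v, hv⟩
  let q' : G.Walk u v := q.map (Embedding.induce S).toHom
  have hq' : ∀ x ∈ q'.support, x ∈ S := by
    intro x hx
    obtain ⟨y, -, rfl⟩ := List.mem_map.mp (Walk.support_map _ _ ▸ hx)
    exact y.2
  have : p = q'.bypass :=
    congrArg Subtype.val ((hG.subsingleton_path u v).elim ⟨p, hp⟩ ⟨_, q'.bypass_isPath⟩)
  exact hq' w (q'.support_bypass_subset_support (this ▸ hw))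

lemma Walk.exists_append_first_mem {u v : V} (p : G.Walk u v) {S : Set V} (hv : v ∈ S) :
    ∃ m ∈ S, ∃ (q : G.Walk u m) (r : G.Walk m v), p = q.append r ∧
      ∀ z ∈ q.support, z ∈ S → z = m := by
  induction p with
  | nil => exact ⟨_, hv, .nil, .nil, rfl, by simp⟩
  | @cons u w v h p ih =>
    by_cases hu : u ∈ S
    · exact ⟨u, hu, .nil, .cons h p, rfl, by simp⟩
    obtain ⟨m, hm, q, r, rfl, hfirst⟩ := ih hv
    refine ⟨m, hm, .cons h q, r, rfl, ?_⟩
    rintro z hz hzS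
    rcases List.mem_cons.mp (Walk.support_cons h q ▸ hz) with rfl | hz
    · exact absurd hzS hu
    · exact hfirst z hz hzS

/-- Walking along the path from `b ∈ S₁ ∩ S₃` towards `a ∈ S₂ ∩ S₃` until `S₂` is first reached,
at `m`, and then on to `c ∈ S₁ ∩ S₂` inside `S₂` is a path from `b` to `c`; so `m ∈ S₁`. -/
lemma IsPathConvex.inter_inter_nonempty (hG : G.Preconnected) {S₁ S₂ S₃ : Set V}
    (h₁ : G.IsPathConvex S₁) (h₂ : G.IsPathConvex S₂) (h₃ : G.IsPathConvex S₃)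
    (h₁₂ : (S₁ ∩ S₂).Nonempty) (h₁₃ : (S₁ ∩ S₃).Nonempty) (h₂₃ : (S₂ ∩ S₃).Nonempty) :
    (S₁ ∩ S₂ ∩ S₃).Nonempty := by
  classical
  obtain ⟨c, hc₁, hc₂⟩ := h₁₂
  obtain ⟨b, hb₁, hb₃⟩ := h₁₃
  obtain ⟨a, ha₂, ha₃⟩ := h₂₃
  let pba := (hG b a).some.bypass
  have hpba : pba.IsPath := Walk.bypass_isPath _
  obtain ⟨m, hm₂, q, r, hqr, hfirst⟩ := pba.exists_append_first_mem ha₂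
  have hmq : m ∈ pba.support :=
    hqr ▸ (Walk.mem_support_append_iff _ _).mpr (Or.inl q.end_mem_support)
  let pmc := (hG m c).some.bypass
  have hpmc : pmc.IsPath := Walk.bypass_isPath _
  have hq : q.IsPath := (hqr ▸ hpba).of_append_left
  have hqpmc : (q.append pmc).IsPath := by
    rw [Walk.isPath_def, Walk.support_append, List.nodup_append]
    refine ⟨hq.support_nodup, hpmc.support_nodup.tail, fun z hzq z' hz' hzz' => ?_⟩
    subst hzz'
    have hz_pmc : z ∈ pmc.support := List.mem_of_mem_tail hz'
    obtain rfl := hfirst z hzq (h₂ hm₂ hc₂ pmc hpmc z hz_pmc)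
    have := hpmc.support_nodup
    rw [← pmc.cons_tail_support] at this
    exact (List.nodup_cons.mp this).1 hz'
  refine ⟨m, ⟨?_, hm₂⟩, h₃ hb₃ ha₃ pba hpba m hmq⟩
  exact h₁ hb₁ hc₁ _ hqpmc m ((Walk.mem_support_append_iff _ _).mpr (Or.inl q.end_mem_support))

/-- Helly property of path-convex sets. The extra set `C` makes the induction go through: the
step replaces `C` by `A k₀ ∩ C`. -/
lemma IsPathConvex.exists_mem_of_pairwise (hG : G.Preconnected) {κ : Type*} (s : Finset κ)
    {A : κ → Set V} (hA : ∀ k ∈ s, G.IsPathConvex (A k)) {C : Set V} (hC : G.IsPathConvex C)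
    (hCne : C.Nonempty) (hmeet : ∀ k ∈ s, ∀ l ∈ s, (A k ∩ A l ∩ C).Nonempty) :
    ∃ v ∈ C, ∀ k ∈ s, v ∈ A k := by
  classical
  induction s using Finset.induction_on generalizing C with
  | empty => exact ⟨hCne.some, hCne.some_mem, by simp⟩
  | @insert k₀ s hk₀ ih =>
    simp only [Finset.mem_insert, forall_eq_or_imp] at hA hmeet ⊢
    have hmeet' : ∀ k ∈ s, ∀ l ∈ s, (A k ∩ A l ∩ (A k₀ ∩ C)).Nonempty := by
      intro k hk l hl
      have h := inter_inter_nonempty hG ((hA.2 k hk).inter hC) ((hA.2 l hl).inter hC)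
        (hA.1.inter hC) (((hmeet.2 k hk).2 l hl).mono ?_) ((hmeet.2 k hk).1.mono ?_)
        ((hmeet.2 l hl).1.mono ?_)
      · exact h.mono fun x hx => ⟨⟨hx.1.1.1, hx.1.2.1⟩, hx.2.1, hx.2.2⟩
      all_goals exact fun x hx => ⟨⟨hx.1.1, hx.2⟩, hx.1.2, hx.2⟩
    obtain ⟨v, ⟨hvk₀, hvC⟩, hv⟩ :=
      ih hA.2 (hA.1.inter hC) (hmeet.1.1.mono fun x hx => ⟨hx.1.1, hx.2⟩) hmeet'
    exact ⟨v, hvC, hvk₀, hv⟩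

def Touches (G : SimpleGraph V) (A B : Set V) : Prop :=
  (A ∩ B).Nonempty ∨ ∃ a ∈ A, ∃ b ∈ B, G.Adj a b

section

variable {s S S' : Set V}

lemma Touches.symm (h : G.Touches S S') : G.Touches S' S := by
  rcases h with ⟨v, hv, hv'⟩ | ⟨a, ha, b, hb, hab⟩
  · exact Or.inl ⟨v, hv', hv⟩
  · exact Or.inr ⟨b, hb, a, ha, hab.symm⟩

lemma Touches.preimage_val (hS : S ⊆ s) (hS' : S' ⊆ s) (h : G.Touches S S') :
    (G.induce s).Touches (Subtype.val ⁻¹' S) (Subtype.val ⁻¹' S') := by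
  rcases h with ⟨v, hv, hv'⟩ | ⟨a, ha, b, hb, hab⟩
  · exact Or.inl ⟨⟨v, hS hv⟩, hv, hv'⟩
  · exact Or.inr ⟨⟨a, hS ha⟩, ha, ⟨b, hS' hb⟩, hb, hab⟩

lemma Connected.induce_preimage_val (hS : S ⊆ s) (h : (G.induce S).Connected) :
    ((G.induce s).induce (Subtype.val ⁻¹' S)).Connected :=
  h.map { toFun := fun v : S => ⟨⟨v.1, hS v.2⟩, v.2⟩, map_rel' := id }
    fun ⟨⟨v, _⟩, hv⟩ => ⟨⟨v, hv⟩, rfl⟩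

end

lemma induce_singleton_connected (v : V) : (G.induce {v}).Connected :=
  ⟨Preconnected.of_subsingleton⟩

end SimpleGraph

section TreeDecomposition

open SimpleGraph

variable {α β ι : Type} {G : SimpleGraph α} {T : SimpleGraph ι} {bag : ι → Finset α}

structure IsTreeDecomposition (G : SimpleGraph α) (T : SimpleGraph ι) (bag : ι → Finset α) :
    Prop where
  isTree : T.IsTree
  exists_bag_of_adj : ∀ u v, G.Adj u v → ∃ i, u ∈ bag i ∧ v ∈ bag i
  connected_induce_mem_bag : ∀ v, (T.induce {i | v ∈ bag i}).Connected

lemma twLE_iff {t : ℕ} : twLE G t ↔ ∃ (ι : Type) (T : SimpleGraph ι) (bag : ι → Finset α),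
    IsTreeDecomposition G T bag ∧ ∀ i, (bag i).card ≤ t + 1 := by
  constructor
  · rintro ⟨ι, T, bag, hT, hadj, hconn, hcard⟩
    exact ⟨ι, T, bag, ⟨hT, hadj, hconn⟩, hcard⟩
  · rintro ⟨ι, T, bag, ⟨hT, hadj, hconn⟩, hcard⟩
    exact ⟨ι, T, bag, hT, hadj, hconn, hcard⟩

namespace IsTreeDecomposition

lemma connected_induce_meets_bag (hD : IsTreeDecomposition G T bag) {S : Set α}
    (hS : (G.induce S).Connected) : (T.induce {i | ∃ v ∈ S, v ∈ bag i}).Connected := by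
  set N := {i | ∃ v ∈ S, v ∈ bag i}
  have hreach : ∀ v : S, ∀ i j (hi : v.1 ∈ bag i) (hj : v.1 ∈ bag j),
      (T.induce N).Reachable ⟨i, v, v.2, hi⟩ ⟨j, v, v.2, hj⟩ := fun v i j hi hj =>
    ((hD.connected_induce_mem_bag v).preconnected ⟨i, hi⟩ ⟨j, hj⟩).map
      (induceHomOfLE _ fun k hk => show k ∈ N from ⟨v, v.2, hk⟩).toHom
  have hwalk : ∀ (v w : S), (G.induce S).Walk v w →
      ∀ i j (hi : v.1 ∈ bag i) (hj : w.1 ∈ bag j),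
        (T.induce N).Reachable ⟨i, v, v.2, hi⟩ ⟨j, w, w.2, hj⟩ := by
    intro v w p
    induction p with
    | nil => exact hreach _
    | cons h p ih =>
      intro i j hi hj
      obtain ⟨m, hm, hm'⟩ := hD.exists_bag_of_adj _ _ h
      exact (hreach _ i m hi hm).trans (ih m j hm' hj)
  obtain ⟨v₀⟩ := hS.nonempty
  obtain ⟨⟨i₀, hi₀⟩⟩ := (hD.connected_induce_mem_bag v₀).nonempty
  rw [connected_iff_exists_forall_reachable]
  refine ⟨⟨i₀, v₀, v₀.2, hi₀⟩, ?_⟩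
  rintro ⟨j, w, hw, hj⟩
  obtain ⟨p⟩ := hS.preconnected v₀ ⟨w, hw⟩
  exact hwalk _ _ p i₀ j hi₀ hj

/-- The nodes whose bags meet a member of the bramble form a subtree, and these subtrees pairwise
intersect, so the Helly property applies. -/
lemma exists_bag_meets_bramble (hD : IsTreeDecomposition G T bag) {κ : Type} (s : Finset κ)
    {A : κ → Set α} (hconn : ∀ k ∈ s, (G.induce (A k)).Connected)
    (htouch : ∀ k ∈ s, ∀ l ∈ s, G.Touches (A k) (A l)) :
    ∃ i, ∀ k ∈ s, ∃ v ∈ A k, v ∈ bag i := by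
  have hmeet : ∀ k ∈ s, ∀ l ∈ s,
      ({i | ∃ v ∈ A k, v ∈ bag i} ∩ {i | ∃ v ∈ A l, v ∈ bag i} ∩ Set.univ).Nonempty := by
    intro k hk l hl
    rcases htouch k hk l hl with ⟨v, hvk, hvl⟩ | ⟨a, ha, b, hb, hab⟩
    · obtain ⟨⟨i, hi⟩⟩ := (hD.connected_induce_mem_bag v).nonempty
      exact ⟨i, ⟨⟨v, hvk, hi⟩, v, hvl, hi⟩, trivial⟩
    · obtain ⟨i, hai, hbi⟩ := hD.exists_bag_of_adj a b hab
      exact ⟨i, ⟨⟨a, ha, hai⟩, b, hb, hbi⟩, trivial⟩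
  obtain ⟨i, -, hi⟩ := IsPathConvex.exists_mem_of_pairwise hD.isTree.connected.preconnected s
    (fun k hk => hD.isTree.isAcyclic.isPathConvex
      (hD.connected_induce_meets_bag (hconn k hk)).preconnected)
    isPathConvex_univ (@Set.univ_nonempty _ hD.isTree.connected.nonempty) hmeet
  exact ⟨i, hi⟩

end IsTreeDecomposition

lemma twLE.exists_hittingSet_of_bramble {t : ℕ} (h : twLE G t) {κ : Type} (s : Finset κ)
    {A : κ → Set α} (hconn : ∀ k ∈ s, (G.induce (A k)).Connected)
    (htouch : ∀ k ∈ s, ∀ l ∈ s, G.Touches (A k) (A l)) :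
    ∃ X : Finset α, X.card ≤ t + 1 ∧ ∀ k ∈ s, ∃ v ∈ A k, v ∈ X := by
  obtain ⟨ι, T, bag, hD, hcard⟩ := twLE_iff.mp h
  obtain ⟨i, hi⟩ := hD.exists_bag_meets_bramble s hconn htouch
  exact ⟨bag i, hcard i, hi⟩

lemma twLE.of_hasMinor {H : SimpleGraph β} {t : ℕ} (h : twLE G t) (hM : HasMinor G H) :
    twLE H t := by
  classical
  obtain ⟨C, -, hconn, hdisj, hadj⟩ := hM
  obtain ⟨ι, T, bag, hD, hcard⟩ := twLE_iff.mp h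
  let owner : {a // ∃ u, a ∈ C u} → β := fun a => a.2.choose
  have howner : ∀ a u, a.1 ∈ C u → owner a = u := fun a u ha => by
    by_contra hne
    exact Set.disjoint_left.mp (hdisj _ _ hne) a.2.choose_spec ha
  let bag' : ι → Finset β := fun i => ((bag i).subtype fun a => ∃ u, a ∈ C u).image owner
  have hmem : ∀ i u, u ∈ bag' i ↔ ∃ a ∈ C u, a ∈ bag i := by
    intro i u
    simp only [bag', Finset.mem_image, Finset.mem_subtype]
    constructor
    · rintro ⟨a, ha, rfl⟩
      exact ⟨a, a.2.choose_spec, ha⟩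
    · rintro ⟨a, hau, ha⟩
      exact ⟨⟨a, u, hau⟩, ha, howner _ _ hau⟩
  refine twLE_iff.mpr ⟨ι, T, bag', ⟨hD.isTree, fun u v huv => ?_, fun u => ?_⟩, fun i => ?_⟩
  · obtain ⟨a, ha, b, hb, hab⟩ := hadj u v huv
    obtain ⟨i, hai, hbi⟩ := hD.exists_bag_of_adj a b hab
    exact ⟨i, (hmem i u).mpr ⟨a, ha, hai⟩, (hmem i v).mpr ⟨b, hb, hbi⟩⟩
  · rw [show {i | u ∈ bag' i} = {i | ∃ a ∈ C u, a ∈ bag i} from Set.ext fun i => hmem i u]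
    exact hD.connected_induce_meets_bag (hconn u)
  · calc (bag' i).card ≤ ((bag i).subtype fun a => ∃ u, a ∈ C u).card := Finset.card_image_le
      _ ≤ (bag i).card := by rw [Finset.card_subtype]; exact Finset.card_filter_le _ _
      _ ≤ t + 1 := hcard i

lemma hasMinor_of_injective {H : SimpleGraph β} (f : H →g G) (hf : Function.Injective f) :
    HasMinor G H :=
  ⟨fun u => {f u}, fun _ => Set.singleton_nonempty _, fun _ => induce_singleton_connected _,
    fun _ _ huv => Set.disjoint_singleton.mpr (hf.ne huv),
    fun _ _ huv => ⟨_, rfl, _, rfl, f.map_adj huv⟩⟩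

/-- Every vertex on the subdivided edge `uv`, except `b v`, is put into the branch set of the
smaller endpoint `u` (for an arbitrary linear order on the vertices of `H`). -/
theorem IsSubdivisionOf.hasMinor {γ β : Type} {W : SimpleGraph γ} {H : SimpleGraph β}
    (h : IsSubdivisionOf W H) : HasMinor W H := by
  classical
  let _ : LinearOrder β := WellOrderingRel.isWellOrder.linearOrder
  obtain ⟨b, p, hb, hpath, -, hbranch, hdisj, -, -⟩ := h
  let C : β → Set γ := fun u =>
    {w | w = b u ∨ ∃ v, ∃ huv : H.Adj u v, u < v ∧ w ∈ (p u v huv).support ∧ w ≠ b v}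
  have hbC : ∀ u x, b x ∈ C u → x = u := by
    rintro u x (hx | ⟨v, huv, -, hx, hxv⟩)
    · exact hb hx
    · exact (hbranch u v huv x hx).resolve_right fun h => hxv (h ▸ rfl)
  refine ⟨C, fun u => ⟨b u, Or.inl rfl⟩, fun u => ?_, fun u u' hne => ?_, fun u v huv => ?_⟩
  · refine induce_connected_of_patches (b u) (Or.inl rfl) fun {w} hw => ?_
    rcases hw with rfl | ⟨v, huv, hlt, hw, hwv⟩
    · exact ⟨{b u}, by simp [C], rfl, rfl, Reachable.refl _⟩
    · let q := (p u v huv).takeUntil w hw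
      have hq : b v ∉ q.support :=
        Walk.endpoint_notMem_support_takeUntil (hpath u v huv) hw (Ne.symm hwv)
      refine ⟨{x | x ∈ q.support}, fun x hx => Or.inr ⟨v, huv, hlt, ?_, ?_⟩,
        q.start_mem_support, q.end_mem_support, q.connected_induce_support.preconnected _ _⟩
      · exact (p u v huv).support_takeUntil_subset_support hw hx
      · rintro rfl
        exact hq hx
  · refine Set.disjoint_left.mpr fun w hw hw' => ?_
    rcases hw with rfl | ⟨v, huv, hlt, hw, hwv⟩
    · exact hne (hbC u' u hw')
    rcases hw' with rfl | ⟨v', huv', hlt', hw', hwv'⟩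
    · exact hne (hbC u u' (Or.inr ⟨v, huv, hlt, hw, hwv⟩)).symm
    by_cases he : s(u, v) = s(u', v')
    · rcases Sym2.eq_iff.mp he with ⟨rfl, -⟩ | ⟨rfl, rfl⟩
      · exact hne rfl
      · exact lt_asymm hlt hlt'
    · rcases hdisj u v huv u' v' huv' he w hw hw' with rfl | rfl
      · exact hne (hbC u' u (Or.inr ⟨v', huv', hlt', hw', hwv'⟩))
      · exact hwv rfl
  · have hforward : ∀ u v (huv : H.Adj u v), u < v → ∃ x ∈ C u, ∃ y ∈ C v, W.Adj x y := by
      intro u v huv hlt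
      have hnil : ¬ (p u v huv).Nil := Walk.not_nil_of_ne fun h => huv.ne (hb h)
      have hadj := Walk.adj_penultimate hnil
      exact ⟨_, Or.inr ⟨v, huv, hlt, Walk.getVert_mem_support _ _, hadj.ne⟩, _, Or.inl rfl, hadj⟩
    rcases lt_trichotomy u v with hlt | rfl | hlt
    · exact hforward u v huv hlt
    · exact absurd huv H.irrefl
    · obtain ⟨x, hx, y, hy, hxy⟩ := hforward v u huv.symm hlt
      exact ⟨y, hy, x, hx, hxy.symm⟩

end TreeDecomposition

/-! In `wallGraph r` a vertex `(a, j)` is adjacent to `(a + 1, j)`, and to `(a, j + 1)` only when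
`a + j` is even. So each column is a path, while two rows `2i+1`, `2i+2` together form a ladder. -/

namespace Wall

def ladder (i n : ℕ) : Set (ℕ × ℕ) :=
  {p | (p.1 = 2 * i + 1 ∨ p.1 = 2 * i + 2) ∧ 1 ≤ p.2 ∧ p.2 ≤ n}

def column (j m : ℕ) : Set (ℕ × ℕ) := {p | p.2 = j ∧ 1 ≤ p.1 ∧ p.1 ≤ m}

def cross (t i j : ℕ) : Set (ℕ × ℕ) := ladder i (2 * t + 1) ∪ column j (2 * t)

/-- A bramble of order `t + 2` in the `(2t+2)`-wall: the bottom ladder, the last column and the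
crosses, which avoid both. -/
noncomputable def bramble (t : ℕ) : Finset (Set (ℕ × ℕ)) :=
  insert (ladder t (2 * t + 1)) <| insert (column (2 * t + 2) (2 * t + 2)) <|
    (Finset.range t ×ˢ Finset.Icc 1 (2 * t + 1)).image fun ij => cross t ij.1 ij.2

lemma mem_bramble {t : ℕ} {S : Set (ℕ × ℕ)} : S ∈ bramble t ↔
    S = ladder t (2 * t + 1) ∨ S = column (2 * t + 2) (2 * t + 2) ∨
      ∃ i < t, ∃ j, 1 ≤ j ∧ j ≤ 2 * t + 1 ∧ S = cross t i j := by
  simp only [bramble, Finset.mem_insert, Finset.mem_image, Finset.mem_product, Finset.mem_range,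
    Finset.mem_Icc, Prod.exists]
  grind

variable {r t : ℕ}

lemma adj_succ_row {a j : ℕ} (ha : 1 ≤ a) (ha' : a + 1 ≤ r) (hj : 1 ≤ j) (hj' : j ≤ r) :
    (wallGraph r).Adj (a, j) (a + 1, j) := by
  rw [wallGraph, SimpleGraph.fromRel_adj]
  exact ⟨by simp, Or.inl ⟨ha, by omega, hj, hj', by omega, ha', hj, hj', Or.inl ⟨rfl, rfl⟩⟩⟩

lemma adj_succ_col {a j : ℕ} (ha : 1 ≤ a) (ha' : a ≤ r) (hj : 1 ≤ j) (hj' : j + 1 ≤ r)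
    (heven : Even (a + j)) : (wallGraph r).Adj (a, j) (a, j + 1) := by
  rw [wallGraph, SimpleGraph.fromRel_adj]
  exact ⟨by simp, Or.inl ⟨ha, ha', hj, by omega, ha, ha', by omega, hj',
    Or.inr ⟨rfl, rfl, heven⟩⟩⟩

lemma connected_column {j m : ℕ} (hj : 1 ≤ j) (hj' : j ≤ r) (hm : 1 ≤ m) (hm' : m ≤ r) :
    ((wallGraph r).induce (column j m)).Connected := by
  induction m, hm using Nat.le_induction with
  | base =>
    rw [show column j 1 = {(1, j)} by ext ⟨a, c⟩; simp [column]; omega]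
    exact SimpleGraph.induce_singleton_connected _
  | succ m hm ih =>
    rw [show column j (m + 1) = column j m ∪ {(m + 1, j)} by
      ext ⟨a, c⟩; simp [column]; omega]
    exact SimpleGraph.connected_induce_union (ih (by omega)).preconnected
      (SimpleGraph.induce_singleton_connected _).preconnected
      (show (m, j) ∈ column j m by simp [column]; omega) rfl (adj_succ_row hm hm' hj hj')

lemma connected_ladder {i n : ℕ} (hi : 2 * i + 2 ≤ r) (hn : 1 ≤ n) (hn' : n ≤ r) :
    ((wallGraph r).induce (ladder i n)).Connected := by
  induction n, hn using Nat.le_induction with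
  | base =>
    rw [show ladder i 1 = {(2 * i + 1, 1), (2 * i + 2, 1)} by ext ⟨a, c⟩; simp [ladder]; omega]
    exact SimpleGraph.induce_pair_connected_of_adj (adj_succ_row (by omega) hi le_rfl (by omega))
  | succ n hn ih =>
    rw [show ladder i (n + 1) = ladder i n ∪ {(2 * i + 1, n + 1), (2 * i + 2, n + 1)} by
      ext ⟨a, c⟩; simp [ladder]; omega]
    have hrung := SimpleGraph.induce_pair_connected_of_adj
      (adj_succ_row (r := r) (a := 2 * i + 1) (j := n + 1) (by omega) hi (by omega) hn')
    rcases Nat.even_or_odd (2 * i + 1 + n) with heven | hodd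
    · exact SimpleGraph.connected_induce_union (ih (by omega)).preconnected hrung.preconnected
        (show (2 * i + 1, n) ∈ ladder i n by simp [ladder]; omega) (by simp)
        (adj_succ_col (by omega) (by omega) hn hn' heven)
    · exact SimpleGraph.connected_induce_union (ih (by omega)).preconnected hrung.preconnected
        (show (2 * i + 2, n) ∈ ladder i n by simp [ladder]; omega) (by simp)
        (adj_succ_col (by omega) hi hn hn' <| by
          rw [show 2 * i + 2 + n = 2 * i + 1 + n + 1 by omega]
          exact hodd.add_one)

lemma connected_of_mem_bramble {S : Set (ℕ × ℕ)} (hS : S ∈ bramble t) :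
    ((wallGraph (2 * t + 2)).induce S).Connected := by
  rcases mem_bramble.mp hS with rfl | rfl | ⟨i, hi, j, hj, hj', rfl⟩
  · exact connected_ladder le_rfl (by omega) (by omega)
  · exact connected_column (by omega) le_rfl (by omega) le_rfl
  · exact SimpleGraph.induce_union_connected
      (connected_ladder (by omega) (by omega) (by omega)).preconnected
      (connected_column hj (by omega) (by omega) (by omega)).preconnected
      ⟨(2 * i + 1, j), by simp [ladder]; omega, by simp [column]; omega⟩

lemma subset_wallVerts_of_mem_bramble {S : Set (ℕ × ℕ)} (hS : S ∈ bramble t) :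
    S ⊆ wallVerts (2 * t + 2) := by
  rcases mem_bramble.mp hS with rfl | rfl | ⟨i, hi, j, hj, hj', rfl⟩ <;>
    rintro ⟨a, c⟩ h <;>
    simp only [cross, ladder, column, Set.mem_union, Set.mem_ofPred_eq] at h <;>
    exact ⟨by omega, by omega, by omega, by omega⟩

lemma touches_of_mem_bramble {S S' : Set (ℕ × ℕ)} (hS : S ∈ bramble t) (hS' : S' ∈ bramble t) :
    (wallGraph (2 * t + 2)).Touches S S' := by
  have hEX : ∀ i < t, ∀ j, 1 ≤ j → j ≤ 2 * t + 1 →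
      (wallGraph (2 * t + 2)).Touches (ladder t (2 * t + 1)) (cross t i j) :=
    fun i hi j hj hj' => Or.inr ⟨(2 * t + 1, j), by simp [ladder]; omega, (2 * t, j),
      Or.inr (by simp [column]; omega), (adj_succ_row (by omega) (by omega) hj (by omega)).symm⟩
  have hDX : ∀ i < t, ∀ j, 1 ≤ j → j ≤ 2 * t + 1 →
      (wallGraph (2 * t + 2)).Touches (column (2 * t + 2) (2 * t + 2)) (cross t i j) :=
    fun i hi j hj hj' =>
    Or.inr ⟨(2 * i + 1, 2 * t + 2), by simp [column]; omega, (2 * i + 1, 2 * t + 1),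
      Or.inl (by simp [ladder]), (adj_succ_col (by omega) (by omega) (by omega) le_rfl
        ⟨i + t + 1, by omega⟩).symm⟩
  have hED : (wallGraph (2 * t + 2)).Touches (ladder t (2 * t + 1))
      (column (2 * t + 2) (2 * t + 2)) :=
    Or.inr ⟨(2 * t + 1, 2 * t + 1), by simp [ladder], (2 * t + 1, 2 * t + 2),
      by simp [column], adj_succ_col (by omega) (by omega) (by omega) le_rfl
        ⟨2 * t + 1, by omega⟩⟩
  have hself : (wallGraph (2 * t + 2)).Touches S S :=
    let ⟨v⟩ := (connected_of_mem_bramble hS).nonempty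
    Or.inl ⟨v, v.2, v.2⟩
  rcases mem_bramble.mp hS with rfl | rfl | ⟨i, hi, j, hj, hj', rfl⟩ <;>
    rcases mem_bramble.mp hS' with rfl | rfl | ⟨i', hi', j', hj'', hj''', rfl⟩
  · exact hself
  · exact hED
  · exact hEX i' hi' j' hj'' hj'''
  · exact hED.symm
  · exact hself
  · exact hDX i' hi' j' hj'' hj'''
  · exact (hEX i hi j hj hj').symm
  · exact (hDX i hi j hj hj').symm
  · exact Or.inl ⟨(2 * i + 1, j'), Or.inl (by simp [ladder]; omega),
      Or.inr (by simp [column]; omega)⟩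

/-- One element lies in the bottom ladder, one in the last column, and, as every cross is hit,
at least `t` lie in the first `2t` rows and `2t + 1` columns. -/
lemma add_two_le_card_of_meets_bramble {Y : Finset (ℕ × ℕ)} (hY : ∀ S ∈ bramble t, ∃ y ∈ Y, y ∈ S) :
    t + 2 ≤ Y.card := by
  classical
  obtain ⟨e, heY, he⟩ := hY _ (mem_bramble.mpr (Or.inl rfl))
  obtain ⟨d, hdY, hd⟩ := hY _ (mem_bramble.mpr (Or.inr (Or.inl rfl)))
  simp only [ladder, column, Set.mem_ofPred_eq] at he hd
  let inCrosses : ℕ × ℕ → Prop := fun y => y.1 ≤ 2 * t ∧ y.2 ≤ 2 * t + 1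
  have hout : 1 < (Y.filter fun y => ¬ inCrosses y).card :=
    Finset.one_lt_card.mpr ⟨e, Finset.mem_filter.mpr ⟨heY, by omega⟩,
      d, Finset.mem_filter.mpr ⟨hdY, by omega⟩, fun h => by rw [h] at he; omega⟩
  have hin : t ≤ (Y.filter inCrosses).card := by
    by_contra! hlt
    obtain ⟨i, hi, hiY⟩ := Finset.exists_mem_notMem_of_card_lt_card
      (s := (Y.filter inCrosses).image fun y => (y.1 - 1) / 2) (t := Finset.range t)
      (Finset.card_image_le.trans_lt (by simpa using hlt))
    obtain ⟨j, hj, hjY⟩ := Finset.exists_mem_notMem_of_card_lt_card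
      (s := (Y.filter inCrosses).image Prod.snd) (t := Finset.Icc 1 (2 * t + 1))
      (Finset.card_image_le.trans_lt (by simp; omega))
    rw [Finset.mem_range] at hi
    rw [Finset.mem_Icc] at hj
    obtain ⟨y, hyY, hy⟩ := hY _ (mem_bramble.mpr (Or.inr (Or.inr ⟨i, hi, j, hj.1, hj.2, rfl⟩)))
    rcases hy with ⟨h₁, h₂, h₃⟩ | ⟨h₁, h₂, h₃⟩
    · exact hiY (Finset.mem_image.mpr ⟨y, Finset.mem_filter.mpr ⟨hyY, by omega⟩, by omega⟩)
    · exact hjY (Finset.mem_image.mpr ⟨y, Finset.mem_filter.mpr ⟨hyY, by omega⟩, h₁⟩)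
  have := Finset.card_filter_add_card_filter_not (s := Y) inCrosses
  omega

end Wall

theorem not_twLE_wall (t : ℕ) : ¬ twLE (Wall (2 * t + 2)) t := by
  intro h
  obtain ⟨X, hX, hhit⟩ := h.exists_hittingSet_of_bramble (Wall.bramble t)
    (A := fun S => Subtype.val ⁻¹' S)
    (fun S hS => (Wall.connected_of_mem_bramble hS).induce_preimage_val
      (Wall.subset_wallVerts_of_mem_bramble hS))
    (fun S hS S' hS' => (Wall.touches_of_mem_bramble hS hS').preimage_val
      (Wall.subset_wallVerts_of_mem_bramble hS) (Wall.subset_wallVerts_of_mem_bramble hS'))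
  have := Wall.add_two_le_card_of_meets_bramble (Y := X.map (Function.Embedding.subtype _))
    fun S hS => by
    obtain ⟨v, hv, hvX⟩ := hhit S hS
    exact ⟨v, Finset.mem_map_of_mem _ hvX, hv⟩
  rw [Finset.card_map] at this
  omega

lemma Finset.card_filter_exists_mem_le {ι α : Type*} (s : Finset ι) {W : ι → Set α}
    (hW : (s : Set ι).PairwiseDisjoint W) (B : Finset α)
    [DecidablePred fun i => ∃ b ∈ B, b ∈ W i] :
    (s.filter fun i => ∃ b ∈ B, b ∈ W i).card ≤ B.card := by
  classical
  calc (s.filter fun i => ∃ b ∈ B, b ∈ W i).card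
      ≤ (B.biUnion fun b => s.filter (b ∈ W ·)).card :=
        Finset.card_le_card fun i hi => by
          obtain ⟨his, b, hb, hbi⟩ := Finset.mem_filter.mp hi
          exact Finset.mem_biUnion.mpr ⟨b, hb, Finset.mem_filter.mpr ⟨his, hbi⟩⟩
    _ ≤ B.card * 1 := Finset.card_biUnion_le_card_mul _ _ _ fun b _ =>
        Finset.card_le_one.mpr fun i hi j hj => by
          by_contra hij
          have hij' := hW (Finset.mem_filter.mp hi).1 (Finset.mem_filter.mp hj).1 hij
          exact Set.disjoint_left.mp hij' (Finset.mem_filter.mp hi).2 (Finset.mem_filter.mp hj).2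
    _ = B.card := mul_one _

namespace CNF

variable {V : Type} [DecidableEq V] (F : CNF V) (B : Finset V)

lemma mem_reduce_cls {τ : V → Bool} {c : F.ι} :
    c ∈ (F.reduce B τ).cls ↔ c ∈ F.cls ∧ Sum.inr c ∈ F.surv B τ :=
  Finset.mem_filter

lemma mem_reduce_lit {τ : V → Bool} {c : F.ι} {l : V × Bool} :
    l ∈ (F.reduce B τ).lit c ↔ l ∈ F.lit c ∧ Sum.inl l.1 ∈ F.surv B τ :=
  Finset.mem_filter

lemma inc_reduce_adj {τ : V → Bool} {a b : V ⊕ F.ι} (h : F.inc.Adj a b) (ha : a ∈ F.surv B τ)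
    (hb : b ∈ F.surv B τ) : (F.reduce B τ).inc.Adj a b := by
  obtain ⟨hne, hab⟩ := (SimpleGraph.fromRel_adj _ _ _).mp h
  refine (SimpleGraph.fromRel_adj _ _ _).mpr ⟨hne, ?_⟩
  have hlit : ∀ {c x}, Sum.inl x ∈ F.surv B τ → ((x, true) ∈ F.lit c ∨ (x, false) ∈ F.lit c) →
      (x, true) ∈ (F.reduce B τ).lit c ∨ (x, false) ∈ (F.reduce B τ).lit c := fun hx =>
    Or.imp (fun h => (F.mem_reduce_lit B).mpr ⟨h, hx⟩) fun h => (F.mem_reduce_lit B).mpr ⟨h, hx⟩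
  rcases a with x | c <;> rcases b with y | d
  · exact hab
  · exact hab.imp_left fun ⟨hd, hl⟩ => ⟨(F.mem_reduce_cls B).mpr ⟨hd, hb⟩, hlit ha hl⟩
  · exact hab.imp_right fun ⟨hc, hl⟩ => ⟨(F.mem_reduce_cls B).mpr ⟨hc, ha⟩, hlit hb hl⟩
  · exact hab

/-- The witness sets `x := true` exactly when `¬x` occurs in a clause of `W`. -/
lemma exists_subset_surv (W : F.inc.Subgraph) (hvars : ∀ x ∈ B, Sum.inl x ∉ W.verts)
    (hkill : ∀ x ∈ B, ∀ c c', Sum.inr c ∈ W.verts → Sum.inr c' ∈ W.verts →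
      (x, true) ∈ F.lit c → (x, false) ∉ F.lit c') :
    ∃ τ, W.verts ⊆ F.surv B τ := by
  classical
  refine ⟨fun x => decide (∃ c, Sum.inr c ∈ W.verts ∧ (x, false) ∈ F.lit c), ?_⟩
  rintro (x | c) hw
  · exact fun hx => hvars x hx hw
  · rintro ⟨x, _ | _⟩ hl hx
    · simpa using ⟨c, hw, hl⟩
    · simpa using fun c' hc' => hkill x hx c c' hw hc' hl

lemma twLE_coe_of_subset_surv {t : ℕ} {τ : V → Bool} (h : twLE (F.reduce B τ).inc t)
    {W : F.inc.Subgraph} (hW : W.verts ⊆ F.surv B τ) : twLE W.coe t :=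
  h.of_hasMinor <| hasMinor_of_injective
    ⟨Subtype.val, fun hab => F.inc_reduce_adj B (W.adj_sub hab) (hW (W.edge_vert hab))
      (hW (W.edge_vert hab.symm))⟩ Subtype.val_injective

end CNF

theorem stmt19_general {V : Type} [DecidableEq V] (t k : ℕ) (F : CNF V)
    {ιO : Type} (Os : Finset ιO) (Wsub : ιO → F.inc.Subgraph)
    (hOdisj : ∀ i ∈ Os, ∀ j ∈ Os, i ≠ j → Disjoint (Wsub i).verts (Wsub j).verts)
    (hOsub : ∀ i ∈ Os, IsSubdivisionOf (Wsub i).coe (Wall (2 * t + 2)))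
    (B : Finset V) (hB : F.strongBackdoor t B) (hBk : B.card ≤ k) :
    (@Finset.filter ιO (fun i => ∃ b ∈ B, Sum.inl b ∈ (Wsub i).verts)
        (fun _ => Classical.propDecidable _) Os).card ≤ k ∧
    ∀ i ∈ Os, (∀ b ∈ B, Sum.inl b ∉ (Wsub i).verts) →
      ∃ x ∈ B, Sum.inl x ∉ (Wsub i).verts ∧
        ∃ c c' : F.ι, Sum.inr c ∈ (Wsub i).verts ∧ Sum.inr c' ∈ (Wsub i).verts ∧
          (x, true) ∈ F.lit c ∧ (x, false) ∈ F.lit c' := by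
  classical
  refine ⟨?_, fun i hi hB0 => ?_⟩
  · rw [Finset.filter_congr_decidable]
    exact (Finset.card_filter_exists_mem_le Os (W := fun i => Sum.inl ⁻¹' (Wsub i).verts)
      (fun i hi j hj hij => (hOdisj i hi j hj hij).preimage _) B).trans hBk
  by_contra! hkill
  obtain ⟨τ, hτ⟩ := F.exists_subset_surv B (Wsub i) hB0 fun x hx => hkill x hx (hB0 x hx)
  exact not_twLE_wall t
    ((F.twLE_coe_of_subset_surv B (hB.2 τ) hτ).of_hasMinor (hOsub i hi).hasMinor)

/-- Let `O` be a family of pairwise vertex-disjoint subdivisions of the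
`(2t+2)`-wall in `inc(F)` and `B` a strong `W_{≤t}`-backdoor set of size at most `k`. Then at
most `k` members of `O` contain a variable of `B`, and every member containing no variable of
`B` (hence at least `|O| − k` members) is killed externally by some variable of `B`. -/
theorem stmt19 {V : Type} [DecidableEq V] (t k : ℕ) (hk : 1 ≤ k) (F : CNF V)
    {ιO : Type} (Os : Finset ιO) (Wsub : ιO → F.inc.Subgraph)
    (hOdisj : ∀ i ∈ Os, ∀ j ∈ Os, i ≠ j → Disjoint (Wsub i).verts (Wsub j).verts)
    (hOsub : ∀ i ∈ Os, IsSubdivisionOf (Wsub i).coe (Wall (2 * t + 2)))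
    (B : Finset V) (hB : F.strongBackdoor t B) (hBk : B.card ≤ k) :
    (@Finset.filter ιO (fun i => ∃ b ∈ B, Sum.inl b ∈ (Wsub i).verts)
        (fun _ => Classical.propDecidable _) Os).card ≤ k ∧
    ∀ i ∈ Os, (∀ b ∈ B, Sum.inl b ∉ (Wsub i).verts) →
      ∃ x ∈ B, Sum.inl x ∉ (Wsub i).verts ∧
        ∃ c c' : F.ι, Sum.inr c ∈ (Wsub i).verts ∧ Sum.inr c' ∈ (Wsub i).verts ∧
          (x, true) ∈ F.lit c ∧ (x, false) ∈ F.lit c' :=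
  stmt19_general t k F Os Wsub hOdisj hOsub B hB hBk
end
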